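/- For all real numbers a and b, the following integral identity holds: ∫_{−π/2}^{π/2} (max((√3/2)·(a·cos φ + b·sin φ), 0))² · cos φ dφ = (1/4)·(a + √(a² + b²))². -/

import Mathlib

open Real

private lemma elastica_key (a b : ℝ) (hb : 0 ≤ b) :
    (∫ x in (-(π/2) : ℝ)..(π/2),
        (max ((Real.sqrt 3 / 2) * (a * Real.cos x + b * Real.sin x)) 0)^2
          * Real.cos x)
      = (1/4) * (a + Real.sqrt (a^2 + b^2))^2 := by
  by_cases h0 : a = 0 ∧ b = 0
  · obtain ⟨ha, hb'⟩ := h0; simp [ha, hb']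
  have hab : 0 < a^2 + b^2 := by
    rcases not_and_or.mp h0 with h | h
    · positivity
    · positivity
  set r := Real.sqrt (a^2 + b^2) with hr_def
  have hr2 : r^2 = a^2 + b^2 := Real.sq_sqrt (le_of_lt hab)
  have hrpos : 0 < r := Real.sqrt_pos.mpr hab
  have har : a ≤ r := by nlinarith [sq_nonneg b]
  have haru : a/r ≤ 1 := by rw [div_le_one hrpos]; exact har
  have harl : -1 ≤ a/r := by
    rw [neg_le, ← neg_div, div_le_one hrpos]; nlinarith [sq_nonneg b]
  set t : ℝ := -Real.arcsin (a/r) with ht_def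
  have hs : Real.sin t = -(a/r) := by
    rw [ht_def, Real.sin_neg, Real.sin_arcsin harl haru]
  have hc : Real.cos t = b/r := by
    rw [ht_def, Real.cos_neg, Real.cos_arcsin]
    have h1 : 1 - (a/r)^2 = (b/r)^2 := by
      field_simp
      linarith [hr2]
    rw [h1, Real.sqrt_sq (by positivity)]
  have htl : -(π/2) ≤ t := neg_le_neg (Real.arcsin_le_pi_div_two _)
  have htu : t ≤ π/2 := by
    rw [ht_def, neg_le]; exact Real.neg_pi_div_two_le_arcsin _
  have hid : ∀ x : ℝ, a * Real.cos x + b * Real.sin x = r * Real.sin (x - t) := by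
    intro x
    rw [Real.sin_sub, hs, hc]
    field_simp
    ring
  clear_value t r
  have hcont : Continuous (fun x : ℝ =>
      (max ((Real.sqrt 3 / 2) * (a * Real.cos x + b * Real.sin x)) 0)^2
        * Real.cos x) := by fun_prop
  have hsplit := intervalIntegral.integral_add_adjacent_intervals
    (a := -(π/2)) (b := t) (c := π/2)
    (hcont.intervalIntegrable (μ := MeasureTheory.volume) _ _)
    (hcont.intervalIntegrable (μ := MeasureTheory.volume) _ _)
  rw [← hsplit]
  have hzero : (∫ x in (-(π/2) : ℝ)..t,
      (max ((Real.sqrt 3 / 2) * (a * Real.cos x + b * Real.sin x)) 0)^2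
        * Real.cos x) = 0 := by
    rw [intervalIntegral.integral_congr (g := fun _ => (0:ℝ))]
    · simp
    · intro x hx
      rw [Set.uIcc_of_le htl] at hx
      have hneg : a * Real.cos x + b * Real.sin x ≤ 0 := by
        rw [hid x]
        have : Real.sin (x - t) ≤ 0 := by
          apply Real.sin_nonpos_of_nonpos_of_neg_pi_le
          · linarith [hx.2]
          · have h1 := hx.1
            linarith [htu]
        nlinarith
      have hmax : max ((Real.sqrt 3 / 2) * (a * Real.cos x + b * Real.sin x)) 0 = 0 := by
        apply max_eq_right
        have h3 : (0:ℝ) ≤ Real.sqrt 3 / 2 := by positivity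
        nlinarith
      simp [hmax]
  rw [hzero, zero_add]
  -- second part via FTC
  set F : ℝ → ℝ := fun x => (3/4) * (a^2 * (Real.sin x - (Real.sin x)^3/3)
      - 2*a*b * ((Real.cos x)^3/3) + b^2 * ((Real.sin x)^3/3)) with hF_def
  have hmain : (∫ x in t..(π/2),
      (max ((Real.sqrt 3 / 2) * (a * Real.cos x + b * Real.sin x)) 0)^2
        * Real.cos x)
      = F (π/2) - F t := by
    rw [intervalIntegral.integral_congr
      (g := fun x => (3/4) * (a * Real.cos x + b * Real.sin x)^2 * Real.cos x)]
    · apply intervalIntegral.integral_eq_sub_of_hasDerivAt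
      · intro x _
        have hsin3 : HasDerivAt (fun y : ℝ => (Real.sin y)^3)
            (3 * (Real.sin x)^2 * Real.cos x) x := by
          simpa using (Real.hasDerivAt_sin x).fun_pow 3
        have hcos3 : HasDerivAt (fun y : ℝ => (Real.cos y)^3)
            (3 * (Real.cos x)^2 * (-Real.sin x)) x := by
          simpa using (Real.hasDerivAt_cos x).fun_pow 3
        have hD := ((((Real.hasDerivAt_sin x).fun_sub (hsin3.div_const 3)).const_mul
            (a^2)).fun_sub ((hcos3.div_const 3).const_mul (2*a*b))).fun_add
            ((hsin3.div_const 3).const_mul (b^2))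
        have := hD.const_mul (3/4 : ℝ)
        convert this using 1
        · rfl
        linear_combination (3/4 * a^2 * Real.cos x) * Real.sin_sq_add_cos_sq x
      · apply Continuous.intervalIntegrable; fun_prop
    · intro x hx
      rw [Set.uIcc_of_le htu] at hx
      have hpos : 0 ≤ a * Real.cos x + b * Real.sin x := by
        rw [hid x]
        have : 0 ≤ Real.sin (x - t) := by
          apply Real.sin_nonneg_of_nonneg_of_le_pi
          · linarith [hx.1]
          · have h1 := hx.2
            linarith [htl]
        nlinarith
      have hmax : max ((Real.sqrt 3 / 2) * (a * Real.cos x + b * Real.sin x)) 0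
          = (Real.sqrt 3 / 2) * (a * Real.cos x + b * Real.sin x) := by
        apply max_eq_left
        have h3 : (0:ℝ) ≤ Real.sqrt 3 / 2 := by positivity
        positivity
      simp only [hmax]
      have h3 : (Real.sqrt 3)^2 = 3 := Real.sq_sqrt (by norm_num)
      rw [mul_pow]
      rw [div_pow, h3]
      ring
  have hFpi : F (π/2) = a^2/2 + b^2/4 := by
    rw [hF_def]
    simp only [Real.sin_pi_div_two, Real.cos_pi_div_two]
    ring
  have hFt : F t = -(a*r)/2 := by
    rw [hF_def]
    simp only [hs, hc]
    field_simp
    linear_combination (2*a*(2*r^2 - a^2 + 2*b^2)) * hr2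
  rw [hmain, hFpi, hFt]
  linear_combination (-1/4) * hr2

/-- Integral identity for the (unconstrained) Euler–Mumford elastica
Hamiltonian:
`∫_{−π/2}^{π/2} ((√3/2)(a cos φ + b sin φ))₊² cos φ dφ = (1/4)(a + √(a²+b²))²`. -/
theorem stmt_6 (a b : ℝ) :
    (∫ x in (-(π/2) : ℝ)..(π/2),
        (max ((Real.sqrt 3 / 2) * (a * Real.cos x + b * Real.sin x)) 0)^2
          * Real.cos x)
      = (1/4) * (a + Real.sqrt (a^2 + b^2))^2 := by
  rcases le_or_gt 0 b with hb | hb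
  · exact elastica_key a b hb
  · have key := elastica_key a (-b) (by linarith)
    have h2 := intervalIntegral.integral_comp_neg
      (a := -(π/2)) (b := (π/2))
      (fun y => (max ((Real.sqrt 3 / 2) * (a * Real.cos y + (-b) * Real.sin y)) 0)^2
        * Real.cos y)
    simp only [neg_neg] at h2
    have h1 : (∫ x in (-(π/2) : ℝ)..(π/2),
        (max ((Real.sqrt 3 / 2) * (a * Real.cos x + (-b) * Real.sin x)) 0)^2
          * Real.cos x)
        = ∫ x in (-(π/2) : ℝ)..(π/2),
          (max ((Real.sqrt 3 / 2) * (a * Real.cos x + b * Real.sin x)) 0)^2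
            * Real.cos x := by
      rw [← h2]
      apply intervalIntegral.integral_congr
      intro x _
      simp only [Real.cos_neg, Real.sin_neg]
      ring_nf
    rw [← h1, key]
    norm_num
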